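/- arXiv:2505.06486 — 3 statements merged into one kernel-verified Lean document; each statement's English description precedes it below -/
import Mathlib

section
/- The deletion-near-contraction relation: for any simple graph G and any edge e of G, X_G = X_{G\e} − X_{(G⊙e)\ℓ_e} + X_{G⊙e}, where G\e is the deletion of e, G⊙e is the leaf-contraction (contract e, then attach a new leaf ℓ_e to the merged vertex), and (G⊙e)\ℓ_e is the dot-contraction (contract e, then add an isolated vertex). -/
open scoped Classical
open Finset

noncomputable section

/-- The chromatic symmetric function of a finite simple graph `G`, as a formal power series
in commuting variables `x_0, x_1, x_2, …`: the coefficient of the monomial `∏ i, xᵢ ^ d i`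
is the number of proper colorings `κ : V → ℕ` whose color classes have sizes prescribed
by `d`, so that `X_G = ∑_κ x_{κ v₁} ⋯ x_{κ vₙ}`. -/
def csf {V : Type} [Fintype V] (G : SimpleGraph V) : MvPowerSeries ℕ ℚ :=
  fun d => (Nat.card {κ : V → ℕ //
      (∀ ⦃v w : V⦄, G.Adj v w → κ v ≠ κ w) ∧
      ∀ i : ℕ, Nat.card {v : V // κ v = i} = d i} : ℚ)

/-- The star graph on `k` vertices: vertex `0` is adjacent to all the others. -/
def starGraph (k : ℕ) : SimpleGraph (Fin k) where
  Adj v w := v ≠ w ∧ ((v : ℕ) = 0 ∨ (w : ℕ) = 0)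
  symm := ⟨fun v w h => ⟨Ne.symm h.1, Or.symm h.2⟩⟩
  loopless := ⟨fun v h => h.1 rfl⟩

/-- The star-basis element `st_λ`, the chromatic symmetric function of the star forest with
component sizes the parts of `λ`. -/
def stPart {n : ℕ} (p : Nat.Partition n) : MvPowerSeries ℕ ℚ :=
  (p.parts.map fun k => csf (starGraph k)).prod

/-- The hook partition `(n - m, 1^m)` of `n`. -/
def hookPartition (n m : ℕ) (h : m + 1 ≤ n) : Nat.Partition n where
  parts := (n - m) ::ₘ Multiset.replicate m 1
  parts_pos := by
    intro i hi
    rcases Multiset.mem_cons.mp hi with h1 | h1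
    · subst h1; omega
    · rw [Multiset.eq_of_mem_replicate h1]; exact one_pos
  parts_sum := by
    rw [Multiset.sum_cons, Multiset.sum_replicate, smul_eq_mul, mul_one]
    omega

/-- The degree of a vertex (stated via `Nat.card` to avoid decidability assumptions). -/
def vdeg {V : Type} (G : SimpleGraph V) (v : V) : ℕ := Nat.card (G.neighborSet v)

/-- An internal edge: an edge both of whose endpoints have degree at least 2. -/
def IsInternalEdge {V : Type} (G : SimpleGraph V) (e : Sym2 V) : Prop :=
  e ∈ G.edgeSet ∧ ∀ v ∈ e, 2 ≤ vdeg G v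

/-- A vertex lies on a cycle of `G`. -/
def OnCycle {V : Type} (G : SimpleGraph V) (v : V) : Prop :=
  ∃ w : G.Walk v v, w.IsCycle

/-- The multiset of sizes of the connected components of `G`. -/
def compSizes {V : Type} [Fintype V] (G : SimpleGraph V) : Multiset ℕ :=
  ((Finset.univ.image (G.connectedComponentMk)).val).map fun C => Nat.card C.supp

/-- The graph obtained from `G` by removing all internal edges (a star forest). -/
def leafGraph {V : Type} [Fintype V] (G : SimpleGraph V) : SimpleGraph V :=
  G.deleteEdges {e : Sym2 V | ∀ v ∈ e, 2 ≤ vdeg G v}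

/-- `λ_LC(G)`: the multiset of component sizes of the star forest obtained from `G` by
removing all internal edges. -/
def lcParts {V : Type} [Fintype V] (G : SimpleGraph V) : Multiset ℕ :=
  compSizes (leafGraph G)

/-- Lexicographic order on partitions of `n`, comparing parts in weakly decreasing order. -/
def partLE {n : ℕ} (p q : Nat.Partition n) : Prop :=
  p = q ∨ List.Lex (· < ·) ((p.parts.sort (· ≤ ·)).reverse) ((q.parts.sort (· ≤ ·)).reverse)

/-- A hook partition: at most one part is greater than `1`. -/
def IsHook {n : ℕ} (p : Nat.Partition n) : Prop :=
  (p.parts.filter (fun i => 2 ≤ i)).card ≤ 1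

end
noncomputable section

/-- Dot-contraction `(G ⊙ e) \ ℓ_e` of the edge `e = uv`: contract `e` (merging `v` into `u`,
removing any duplicate edges) and leave `v` as an isolated vertex. -/
def dotContract {V : Type} (G : SimpleGraph V) (u v : V) : SimpleGraph V where
  Adj x y := x ≠ y ∧ x ≠ v ∧ y ≠ v ∧
    (G.Adj x y ∨ (x = u ∧ G.Adj v y) ∨ (y = u ∧ G.Adj x v))
  symm := by
    constructor
    rintro x y ⟨hxy, hx, hy, h⟩
    refine ⟨hxy.symm, hy, hx, ?_⟩
    rcases h with h | ⟨h1, h2⟩ | ⟨h1, h2⟩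
    · exact Or.inl h.symm
    · exact Or.inr (Or.inr ⟨h1, h2.symm⟩)
    · exact Or.inr (Or.inl ⟨h1, h2.symm⟩)
  loopless := ⟨fun x h => h.1 rfl⟩

/-- Leaf-contraction `G ⊙ e` of the edge `e = uv`: contract `e` (merging `v` into `u`,
removing any duplicate edges) and attach `v` back as a new leaf adjacent to `u`
by the leaf-edge `ℓ_e`. -/
def leafContract {V : Type} (G : SimpleGraph V) (u v : V) : SimpleGraph V where
  Adj x y := x ≠ y ∧
    (({x, y} : Set V) = {u, v} ∨ (x ≠ v ∧ y ≠ v ∧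
      (G.Adj x y ∨ (x = u ∧ G.Adj v y) ∨ (y = u ∧ G.Adj x v))))
  symm := by
    constructor
    rintro x y ⟨hxy, h⟩
    refine ⟨hxy.symm, ?_⟩
    rcases h with h | ⟨hx, hy, h⟩
    · left; rw [Set.pair_comm]; exact h
    · right
      refine ⟨hy, hx, ?_⟩
      rcases h with h | ⟨h1, h2⟩ | ⟨h1, h2⟩
      · exact Or.inl h.symm
      · exact Or.inr (Or.inr ⟨h1, h2.symm⟩)
      · exact Or.inr (Or.inl ⟨h1, h2.symm⟩)
  loopless := ⟨fun x h => h.1 rfl⟩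

end

section DNCAux

/-- Subtypes with a fixed color-class-size profile are finite. -/
lemma dnc_finite {V : Type} [Fintype V] (d : ℕ →₀ ℕ) (pr : (V → ℕ) → Prop) :
    Finite {κ : V → ℕ // pr κ ∧ ∀ i : ℕ, Nat.card {v : V // κ v = i} = d i} := by
  have key : ∀ (κ : V → ℕ), (∀ i, Nat.card {v : V // κ v = i} = d i) →
      ∀ w : V, κ w ∈ d.support := by
    intro κ hκ w
    rw [Finsupp.mem_support_iff, ← hκ (κ w)]
    have : Nonempty {x : V // κ x = κ w} := ⟨⟨w, rfl⟩⟩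
    exact Nat.card_pos.ne'
  refine Finite.of_injective
    (fun x => (fun w => (⟨x.1 w, key x.1 x.2.2 w⟩ : d.support))) ?_
  intro a b hab
  apply Subtype.ext
  funext w
  exact congrArg Subtype.val (congrFun hab w)

lemma dnc_split {α : Type} (p q r : α → Prop) [Finite {x // p x ∧ r x}] :
    Nat.card {x // p x ∧ r x}
      = Nat.card {x // (p x ∧ q x) ∧ r x} + Nat.card {x // (p x ∧ ¬ q x) ∧ r x} := by
  classical
  haveI : Finite {x // (p x ∧ q x) ∧ r x} :=
    Finite.of_injective (fun y => (⟨y.1, y.2.1.1, y.2.2⟩ : {x // p x ∧ r x}))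
      (by rintro ⟨a, ha⟩ ⟨b, hb⟩ hab; simpa using hab)
  haveI : Finite {x // (p x ∧ ¬ q x) ∧ r x} :=
    Finite.of_injective (fun y => (⟨y.1, y.2.1.1, y.2.2⟩ : {x // p x ∧ r x}))
      (by rintro ⟨a, ha⟩ ⟨b, hb⟩ hab; simpa using hab)
  rw [← Nat.card_sum]
  apply Nat.card_congr
  exact {
    toFun := fun y => if hq : q y.1 then .inl ⟨y.1, ⟨y.2.1, hq⟩, y.2.2⟩
      else .inr ⟨y.1, ⟨y.2.1, hq⟩, y.2.2⟩
    invFun := fun s => s.elim (fun y => ⟨y.1, y.2.1.1, y.2.2⟩) (fun y => ⟨y.1, y.2.1.1, y.2.2⟩)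
    left_inv := fun y => by by_cases hq : q y.1 <;> simp [hq]
    right_inv := fun s => by rcases s with y | y <;> simp [y.2.1.2] }

lemma dnc_pair_eq {V : Type} {x y u v : V} (huv : u ≠ v)
    (heq : ({x, y} : Set V) = {u, v}) : (x = u ∧ y = v) ∨ (x = v ∧ y = u) := by
  have hu : u ∈ ({x, y} : Set V) := heq ▸ Set.mem_insert u {v}
  have hv : v ∈ ({x, y} : Set V) := heq ▸ Set.mem_insert_of_mem u rfl
  have hx : x ∈ ({u, v} : Set V) := heq ▸ Set.mem_insert x {y}
  rcases hu with hu | hu <;> rcases hv with hv | hv <;>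
    simp_all [Set.mem_insert_iff, Set.mem_singleton_iff]

end DNCAux

/-- The deletion-near-contraction relation:
`X_G = X_{G\e} − X_{(G⊙e)\ℓ_e} + X_{G⊙e}` for any edge `e = uv` of a simple graph `G`. -/
theorem csf_deletion_near_contraction {V : Type} [Fintype V] (G : SimpleGraph V)
    (u v : V) (h : G.Adj u v) :
    csf G = csf (G.deleteEdges {s(u, v)}) - csf (dotContract G u v) + csf (leafContract G u v) := by
  classical
  have huv : u ≠ v := h.ne
  funext d
  show (Nat.card _ : ℚ) = (Nat.card _ : ℚ) - (Nat.card _ : ℚ) + (Nat.card _ : ℚ)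
  set pG : (V → ℕ) → Prop := fun κ => ∀ ⦃x y : V⦄, G.Adj x y → κ x ≠ κ y with hpG
  set pDel : (V → ℕ) → Prop :=
    fun κ => ∀ ⦃x y : V⦄, (G.deleteEdges {s(u, v)}).Adj x y → κ x ≠ κ y with hpDel
  set pDot : (V → ℕ) → Prop := fun κ => ∀ ⦃x y : V⦄, (dotContract G u v).Adj x y → κ x ≠ κ y
    with hpDot
  set pLeaf : (V → ℕ) → Prop := fun κ => ∀ ⦃x y : V⦄, (leafContract G u v).Adj x y → κ x ≠ κ y
    with hpLeaf
  set r : (V → ℕ) → Prop := fun κ => ∀ i : ℕ, Nat.card {w : V // κ w = i} = d i with hr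
  set q : (V → ℕ) → Prop := fun κ => κ u = κ v with hq
  -- key propositional equivalences
  have L1 : ∀ κ, (pDel κ ∧ ¬ q κ) ↔ pG κ := by
    intro κ
    constructor
    · rintro ⟨hdel, hne⟩ x y hxy
      by_cases he : s(x, y) = s(u, v)
      · rcases Sym2.eq_iff.mp he with ⟨hx, hy⟩ | ⟨hx, hy⟩
        · subst hx; subst hy; exact hne
        · subst hx; subst hy; exact fun hc => hne hc.symm
      · exact hdel (SimpleGraph.deleteEdges_adj.mpr ⟨hxy, by simpa using he⟩)
    · intro hg
      refine ⟨fun x y hxy => hg (SimpleGraph.deleteEdges_adj.mp hxy).1, hg h⟩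
  have L2 : ∀ κ, (pDot κ ∧ ¬ q κ) ↔ pLeaf κ := by
    intro κ
    constructor
    · rintro ⟨hdot, hne⟩ x y hxy
      obtain ⟨hxy', hcase⟩ := hxy
      rcases hcase with heq | ⟨hxv, hyv, hD⟩
      · rcases dnc_pair_eq huv heq with ⟨hx, hy⟩ | ⟨hx, hy⟩
        · subst hx; subst hy; exact hne
        · subst hx; subst hy; exact fun hc => hne hc.symm
      · exact hdot ⟨hxy', hxv, hyv, hD⟩
    · intro hl
      constructor
      · rintro x y ⟨hxy, hxv, hyv, hD⟩
        exact hl ⟨hxy, Or.inr ⟨hxv, hyv, hD⟩⟩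
      · exact hl ⟨huv, Or.inl rfl⟩
  have L3 : ∀ κ, (pDel κ ∧ q κ) ↔ (pDot κ ∧ q κ) := by
    intro κ
    constructor
    · rintro ⟨hdel, heq⟩
      refine ⟨?_, heq⟩
      rintro x y ⟨hxy, hxv, hyv, hD⟩
      rcases hD with hxy' | ⟨hx, hvy⟩ | ⟨hy, hxv'⟩
      · refine hdel (SimpleGraph.deleteEdges_adj.mpr ⟨hxy', ?_⟩)
        simp only [Set.mem_singleton_iff, Sym2.eq_iff]
        rintro (⟨h1, h2⟩ | ⟨h1, h2⟩)
        · exact hyv h2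
        · exact hxv h1
      · have hyu : y ≠ u := fun hc => hxy (hx.trans hc.symm)
        rw [hx, heq]
        refine hdel (SimpleGraph.deleteEdges_adj.mpr ⟨hvy, ?_⟩)
        simp only [Set.mem_singleton_iff, Sym2.eq_iff]
        rintro (⟨h1, h2⟩ | ⟨h1, h2⟩)
        · exact huv h1.symm
        · exact hyu h2
      · have hxu : x ≠ u := fun hc => hxy (hc.trans hy.symm)
        rw [hy, heq]
        refine hdel (SimpleGraph.deleteEdges_adj.mpr ⟨hxv', ?_⟩)
        simp only [Set.mem_singleton_iff, Sym2.eq_iff]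
        rintro (⟨h1, h2⟩ | ⟨h1, h2⟩)
        · exact hxu h1
        · exact huv h2.symm
    · rintro ⟨hdot, heq⟩
      refine ⟨?_, heq⟩
      rintro x y hxy
      obtain ⟨hxy', hne⟩ := SimpleGraph.deleteEdges_adj.mp hxy
      simp only [Set.mem_singleton_iff, Sym2.eq_iff] at hne
      push_neg at hne
      have hxyne : x ≠ y := hxy'.ne
      by_cases hxv : x = v
      · have hyu : y ≠ u := fun hc => hne.2 hxv hc
        have hyv : y ≠ v := fun hc => hxyne (hxv.trans hc.symm)
        rw [hxv, ← heq]
        exact hdot ⟨fun hc => hyu hc.symm, huv, hyv, Or.inr (Or.inl ⟨rfl, hxv ▸ hxy'⟩)⟩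
      · by_cases hyv : y = v
        · have hxu : x ≠ u := fun hc => hne.1 hc hyv
          rw [hyv, ← heq]
          exact hdot ⟨hxu, hxv, huv, Or.inr (Or.inr ⟨rfl, hyv ▸ hxy'⟩)⟩
        · exact hdot ⟨hxyne, hxv, hyv, Or.inl hxy'⟩
  -- finiteness
  haveI fdel : Finite {κ : V → ℕ // pDel κ ∧ r κ} := dnc_finite d pDel
  haveI fdot : Finite {κ : V → ℕ // pDot κ ∧ r κ} := dnc_finite d pDot
  -- splits
  have hdelsplit := dnc_split pDel q r
  have hdotsplit := dnc_split pDot q r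
  have e1 : Nat.card {κ : V → ℕ // (pDel κ ∧ ¬ q κ) ∧ r κ}
      = Nat.card {κ : V → ℕ // pG κ ∧ r κ} :=
    Nat.card_congr (Equiv.subtypeEquivRight (fun κ => by rw [L1 κ]))
  have e2 : Nat.card {κ : V → ℕ // (pDot κ ∧ ¬ q κ) ∧ r κ}
      = Nat.card {κ : V → ℕ // pLeaf κ ∧ r κ} :=
    Nat.card_congr (Equiv.subtypeEquivRight (fun κ => by rw [L2 κ]))
  have e3 : Nat.card {κ : V → ℕ // (pDel κ ∧ q κ) ∧ r κ}
      = Nat.card {κ : V → ℕ // (pDot κ ∧ q κ) ∧ r κ} :=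
    Nat.card_congr (Equiv.subtypeEquivRight (fun κ => by rw [L3 κ]))
  rw [e1, e3] at hdelsplit
  rw [e2] at hdotsplit
  show (Nat.card {κ : V → ℕ // pG κ ∧ r κ} : ℚ)
      = (Nat.card {κ : V → ℕ // pDel κ ∧ r κ} : ℚ)
        - (Nat.card {κ : V → ℕ // pDot κ ∧ r κ} : ℚ)
        + (Nat.card {κ : V → ℕ // pLeaf κ ∧ r κ} : ℚ)
  rw [hdelsplit, hdotsplit]
  push_cast
  ring
end

section
/- If G is a connected unicyclic graph of order n with cycle of size c ≥ 3, then the coefficient of st_{(n)} in the star-basis expansion of X_G equals c − 1. -/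
open scoped Classical
open Finset

noncomputable section StarAux
open Finset

/-- Number of proper colorings of `G` with `k` colors. -/
def pcount {V : Type} [Fintype V] (G : SimpleGraph V) (k : ℕ) : ℕ :=
  Nat.card {κ : V → Fin k // ∀ ⦃v w : V⦄, G.Adj v w → κ v ≠ κ w}

def Dset (n k : ℕ) : Finset (ℕ →₀ ℕ) := Finset.finsuppAntidiag (Finset.range k) n

def Phi (n k : ℕ) (f : MvPowerSeries ℕ ℚ) : ℚ := ∑ d ∈ Dset n k, f d

def HomDeg (m : ℕ) (f : MvPowerSeries ℕ ℚ) : Prop :=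
  ∀ d : ℕ →₀ ℕ, f d ≠ 0 → d.sum (fun _ x => x) = m

lemma natcard_fiber_eq {V : Type} [Fintype V] (κ : V → ℕ) (i : ℕ) :
    Nat.card {v : V // κ v = i} = (univ.filter (fun v => κ v = i)).card := by
  rw [Nat.card_eq_fintype_card, Fintype.card_subtype]

lemma csf_hom {V : Type} [Fintype V] (G : SimpleGraph V) :
    HomDeg (Fintype.card V) (csf G) := by
  intro d hd
  have hne : Nonempty {κ : V → ℕ // (∀ ⦃v w : V⦄, G.Adj v w → κ v ≠ κ w) ∧
      ∀ i : ℕ, Nat.card {v : V // κ v = i} = d i} := by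
    have h0 : Nat.card {κ : V → ℕ // (∀ ⦃v w : V⦄, G.Adj v w → κ v ≠ κ w) ∧
        ∀ i : ℕ, Nat.card {v : V // κ v = i} = d i} ≠ 0 := by
      intro h0; apply hd; simp only [csf, h0, Nat.cast_zero]
    exact (Nat.card_ne_zero.mp h0).1
  obtain ⟨⟨κ, _, hκ⟩⟩ := hne
  have hmem : ∀ v : V, v ∈ (univ : Finset V) → κ v ∈ d.support := by
    intro v _
    rw [Finsupp.mem_support_iff, ← hκ (κ v), natcard_fiber_eq]
    exact Finset.card_ne_zero_of_mem (Finset.mem_filter.mpr ⟨Finset.mem_univ v, rfl⟩)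
  have h1 : (univ : Finset V).card = ∑ i ∈ d.support, (univ.filter (fun v => κ v = i)).card :=
    Finset.card_eq_sum_card_fiberwise hmem
  have h2 : ∀ i ∈ d.support, (univ.filter (fun v => κ v = i)).card = d i := by
    intro i _; rw [← natcard_fiber_eq, hκ]
  rw [Finsupp.sum]
  rw [Finset.sum_congr rfl h2] at h1
  rw [← h1, Finset.card_univ]

end StarAux
noncomputable section StarAux2
open Finset

/-- class-size finsupp of a coloring -/
def sizes {V : Type} [Fintype V] (κ : V → Fin k) : ℕ →₀ ℕ :=
  ∑ v : V, Finsupp.single ((κ v : ℕ)) 1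

lemma sizes_apply {V : Type} [Fintype V] (κ : V → Fin k) (i : ℕ) :
    sizes κ i = (univ.filter (fun v => (κ v : ℕ) = i)).card := by
  rw [sizes, Finset.sum_apply', Finset.card_filter]
  refine Finset.sum_congr rfl fun v _ => ?_
  rw [Finsupp.single_apply]

lemma sizes_mem_Dset {V : Type} [Fintype V] (k : ℕ) (κ : V → Fin k) :
    sizes κ ∈ Dset (Fintype.card V) k := by
  rw [Dset, Finset.mem_finsuppAntidiag]
  constructor
  · have h1 : (univ : Finset V).card =
        ∑ i ∈ Finset.range k, (univ.filter (fun v => (κ v : ℕ) = i)).card :=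
      Finset.card_eq_sum_card_fiberwise (fun v _ => Finset.mem_range.mpr (κ v).isLt)
    rw [← Finset.card_univ, h1]
    exact Finset.sum_congr rfl fun i _ => sizes_apply κ i
  · intro i hi
    rw [Finsupp.mem_support_iff, sizes_apply] at hi
    obtain ⟨v, hv⟩ := Finset.card_ne_zero.mp hi
    obtain ⟨-, hv⟩ := Finset.mem_filter.mp hv
    rw [← hv]
    exact Finset.mem_range.mpr (κ v).isLt

lemma csf_coeff_eq {V : Type} [Fintype V] (G : SimpleGraph V) (k : ℕ) (d : ℕ →₀ ℕ)
    (hd : d ∈ Dset (Fintype.card V) k) :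
    csf G d = ((univ.filter (fun κ : V → Fin k =>
      (∀ ⦃v w : V⦄, G.Adj v w → κ v ≠ κ w) ∧ sizes κ = d)).card : ℚ) := by
  have hsupp : ∀ i : ℕ, d i ≠ 0 → i < k := by
    intro i hi
    rw [Dset, Finset.mem_finsuppAntidiag] at hd
    exact Finset.mem_range.mp (hd.2 (Finsupp.mem_support_iff.mpr hi))
  have hbd : ∀ (κ : {κ : V → ℕ // (∀ ⦃v w : V⦄, G.Adj v w → κ v ≠ κ w) ∧
      ∀ i : ℕ, Nat.card {v : V // κ v = i} = d i}) (v : V), κ.1 v < k := by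
    intro κ v
    have h2 := κ.2.2 (κ.1 v)
    rw [natcard_fiber_eq] at h2
    refine hsupp _ ?_
    rw [← h2]
    exact Finset.card_ne_zero_of_mem (Finset.mem_filter.mpr ⟨Finset.mem_univ v, rfl⟩)
  have e :
      {κ : V → Fin k // (∀ ⦃v w : V⦄, G.Adj v w → κ v ≠ κ w) ∧ sizes κ = d} ≃
      {κ : V → ℕ // (∀ ⦃v w : V⦄, G.Adj v w → κ v ≠ κ w) ∧
        ∀ i : ℕ, Nat.card {v : V // κ v = i} = d i} :=
    { toFun := fun κ => ⟨fun v => (κ.1 v : ℕ),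
        fun v w hvw h => κ.2.1 hvw (Fin.val_injective h),
        fun i => by rw [natcard_fiber_eq, ← sizes_apply, κ.2.2]⟩
      invFun := fun κ => ⟨fun v => ⟨κ.1 v, hbd κ v⟩,
        fun v w hvw h => κ.2.1 hvw (by simpa using congrArg Fin.val h),
        by ext i; rw [sizes_apply, ← κ.2.2 i, natcard_fiber_eq]⟩
      left_inv := fun κ => by ext v; rfl
      right_inv := fun κ => by ext v; rfl }
  rw [csf, ← Nat.card_congr e, Nat.card_eq_fintype_card, Fintype.card_subtype]

lemma Phi_csf {V : Type} [Fintype V] (G : SimpleGraph V) (k : ℕ) :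
    Phi (Fintype.card V) k (csf G) = (pcount G k : ℚ) := by
  classical
  set P : Finset (V → Fin k) :=
    univ.filter (fun κ => ∀ ⦃v w : V⦄, G.Adj v w → κ v ≠ κ w) with hP
  have hp : pcount G k = P.card := by
    rw [pcount, Nat.card_eq_fintype_card, Fintype.card_subtype]
  have hfib : P.card = ∑ d ∈ Dset (Fintype.card V) k,
      (P.filter (fun κ => sizes κ = d)).card :=
    Finset.card_eq_sum_card_fiberwise (fun κ _ => sizes_mem_Dset k κ)
  rw [Phi, hp, hfib, Nat.cast_sum]
  refine Finset.sum_congr rfl fun d hd => ?_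
  rw [csf_coeff_eq G k d hd, hP, Finset.filter_filter]

end StarAux2
noncomputable section StarAux3
open Finset

lemma support_subset_add_left (u v : ℕ →₀ ℕ) : u.support ⊆ (u + v).support := by
  intro i hi
  rw [Finsupp.mem_support_iff] at hi ⊢
  simp only [Finsupp.add_apply]
  omega

lemma support_subset_add_right (u v : ℕ →₀ ℕ) : v.support ⊆ (u + v).support := by
  rw [add_comm]; exact support_subset_add_left v u

lemma Phi_mul {a b k : ℕ} {f g : MvPowerSeries ℕ ℚ} (hf : HomDeg a f) (hg : HomDeg b g) :
    Phi (a + b) k (f * g) = Phi a k f * Phi b k g := by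
  classical
  have hco : ∀ d : ℕ →₀ ℕ, (f * g) d =
      ∑ x ∈ Finset.HasAntidiagonal.antidiagonal d, f x.1 * g x.2 := fun d =>
    MvPowerSeries.coeff_mul d f g
  rw [Phi, Finset.sum_congr rfl fun d _ => hco d]
  rw [← Finset.sum_biUnion]
  · have hsub : Dset a k ×ˢ Dset b k ⊆
        (Dset (a + b) k).biUnion (fun d => Finset.HasAntidiagonal.antidiagonal d) := by
      rintro ⟨u, v⟩ huv
      rw [Finset.mem_product] at huv
      obtain ⟨hu, hv⟩ := huv
      rw [Dset, Finset.mem_finsuppAntidiag'] at hu hv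
      refine Finset.mem_biUnion.mpr ⟨u + v, ?_, ?_⟩
      · rw [Dset, Finset.mem_finsuppAntidiag']
        constructor
        · rw [Finsupp.sum_add_index (by simp) (by simp)]
          rw [hu.1, hv.1]
        · exact (Finsupp.support_add).trans (Finset.union_subset hu.2 hv.2)
      · rw [Finset.HasAntidiagonal.mem_antidiagonal]
    rw [← Finset.sum_subset hsub]
    · rw [Finset.sum_product, Phi, Phi]; exact (Finset.sum_mul_sum _ _ _ _).symm
    · rintro ⟨u, v⟩ hx hx2
      by_contra h0
      have hfu : f u ≠ 0 := fun h => h0 (by simp [h])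
      have hgv : g v ≠ 0 := fun h => h0 (by simp [h])
      obtain ⟨d, hd, hmem⟩ := Finset.mem_biUnion.mp hx
      rw [Finset.HasAntidiagonal.mem_antidiagonal] at hmem
      rw [Dset, Finset.mem_finsuppAntidiag] at hd
      apply hx2
      rw [Finset.mem_product]
      constructor <;> rw [Dset, Finset.mem_finsuppAntidiag']
      · exact ⟨hf u hfu, (support_subset_add_left u v).trans (hmem ▸ hd.2)⟩
      · exact ⟨hg v hgv, (support_subset_add_right u v).trans (hmem ▸ hd.2)⟩
  · -- pairwise disjoint antidiagonals
    intro d1 _ d2 _ hne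
    simp only [Function.onFun]
    rw [Finset.disjoint_left]
    intro x h1 h2
    rw [Finset.HasAntidiagonal.mem_antidiagonal] at h1 h2
    exact hne (h1 ▸ h2)

lemma one_hom : HomDeg 0 (1 : MvPowerSeries ℕ ℚ) := by
  intro d hd
  have : (MvPowerSeries.coeff (R := ℚ) d) 1 ≠ 0 := hd
  rw [MvPowerSeries.coeff_one] at this
  by_cases h : d = 0
  · rw [h]; simp
  · simp [h] at this

lemma HomDeg.mul {a b : ℕ} {f g : MvPowerSeries ℕ ℚ} (hf : HomDeg a f) (hg : HomDeg b g) :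
    HomDeg (a + b) (f * g) := by
  intro d hd
  rw [show (f * g) d = _ from MvPowerSeries.coeff_mul d f g] at hd
  obtain ⟨x, hx, hne⟩ := Finset.exists_ne_zero_of_sum_ne_zero hd
  rw [Finset.HasAntidiagonal.mem_antidiagonal] at hx
  have h1 : f x.1 ≠ 0 := fun h => hne (mul_eq_zero.mpr (Or.inl h))
  have h2 : g x.2 ≠ 0 := fun h => hne (mul_eq_zero.mpr (Or.inr h))
  rw [← hx, Finsupp.sum_add_index (by simp) (by simp), hf _ h1, hg _ h2]

end StarAux3
noncomputable section StarAux4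
open Finset

lemma pcount_star (m' k : ℕ) : pcount (starGraph (m' + 1)) k = k * (k - 1) ^ m' := by
  classical
  have e : {κ : Fin (m' + 1) → Fin k // ∀ ⦃v w : Fin (m' + 1)⦄,
        (starGraph (m' + 1)).Adj v w → κ v ≠ κ w} ≃
      (c : Fin k) × (Fin m' → {x : Fin k // x ≠ c}) :=
    { toFun := fun κ => ⟨κ.1 0, fun i => ⟨κ.1 i.succ, by
        refine κ.2 (v := i.succ) (w := 0) (show i.succ ≠ 0 ∧ ((i.succ : ℕ) = 0 ∨ ((0 : Fin (m' + 1)) : ℕ) = 0) from ⟨Fin.succ_ne_zero i, Or.inr rfl⟩)⟩⟩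
      invFun := fun x => ⟨fun v => Fin.cases x.1 (fun i => (x.2 i).1) v, by
        rintro v w (⟨hne, h0 | h0⟩ : v ≠ w ∧ ((v : ℕ) = 0 ∨ (w : ℕ) = 0)) heq
        · have hv : v = 0 := Fin.ext h0
          subst hv
          obtain ⟨j, rfl⟩ := Fin.eq_succ_of_ne_zero (Ne.symm hne)
          simp only [Fin.cases_zero, Fin.cases_succ] at heq
          exact (x.2 j).2 heq.symm
        · have hw : w = 0 := Fin.ext h0
          subst hw
          obtain ⟨j, rfl⟩ := Fin.eq_succ_of_ne_zero hne
          simp only [Fin.cases_zero, Fin.cases_succ] at heq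
          exact (x.2 j).2 heq⟩
      left_inv := fun κ => by
        ext v
        refine Fin.cases ?_ (fun i => ?_) v <;> simp
      right_inv := fun x => by
        refine Sigma.ext ?_ ?_ <;> simp }
  rw [pcount, Nat.card_congr e, Nat.card_eq_fintype_card, Fintype.card_sigma]
  have hcard : ∀ c : Fin k, Fintype.card {x : Fin k // x ≠ c} = k - 1 := by
    intro c
    rw [Fintype.card_subtype]
    rw [Finset.filter_ne' univ c, Finset.card_erase_of_mem (Finset.mem_univ c),
      Finset.card_univ, Fintype.card_fin]
  simp only [Fintype.card_fun, hcard, Fintype.card_fin]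
  simp [Finset.sum_const, Finset.card_univ]

lemma pcount_star_cast (m k : ℕ) (hm : 1 ≤ m) :
    (pcount (starGraph m) k : ℚ) = (k : ℚ) * ((k : ℚ) - 1) ^ (m - 1) := by
  obtain ⟨m', rfl⟩ : ∃ m', m = m' + 1 := ⟨m - 1, by omega⟩
  rw [pcount_star]
  rcases Nat.eq_zero_or_pos k with hk | hk
  · subst hk; simp
  · have : ((k - 1 : ℕ) : ℚ) = (k : ℚ) - 1 := by
      rw [Nat.cast_sub hk, Nat.cast_one]
    push_cast [← this]
    norm_num

lemma hom_prod (s : Multiset ℕ) :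
    HomDeg s.sum ((s.map fun m => csf (starGraph m)).prod) := by
  induction s using Multiset.induction_on with
  | empty => simpa using one_hom
  | cons a s ih =>
    rw [Multiset.map_cons, Multiset.prod_cons, Multiset.sum_cons]
    have := (csf_hom (starGraph a)).mul ih
    rwa [Fintype.card_fin] at this

lemma Phi_one (k : ℕ) : Phi 0 k (1 : MvPowerSeries ℕ ℚ) = 1 := by
  rw [Phi, show Dset 0 k = {0} by rw [Dset]; exact Finset.finsuppAntidiag_zero _]
  show ∑ d ∈ ({0} : Finset (ℕ →₀ ℕ)), MvPowerSeries.coeff d (1 : MvPowerSeries ℕ ℚ) = 1; rw [Finset.sum_singleton]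
  exact MvPowerSeries.coeff_zero_one (σ := ℕ) (R := ℚ)

lemma Phi_prod (s : Multiset ℕ) (h1 : ∀ m ∈ s, 1 ≤ m) (k : ℕ) :
    Phi s.sum k ((s.map fun m => csf (starGraph m)).prod) =
      ((s.map fun m => (k : ℚ) * ((k : ℚ) - 1) ^ (m - 1)).prod) := by
  induction s using Multiset.induction_on with
  | empty => simpa using Phi_one k
  | cons a s ih =>
    rw [Multiset.map_cons, Multiset.prod_cons, Multiset.sum_cons, Multiset.map_cons,
      Multiset.prod_cons]
    have ha : HomDeg a (csf (starGraph a)) := by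
      have := csf_hom (starGraph a); rwa [Fintype.card_fin] at this
    rw [Phi_mul ha (hom_prod s), ih (fun m hm => h1 m (Multiset.mem_cons_of_mem hm))]
    have : Phi a k (csf (starGraph a)) = (k : ℚ) * ((k : ℚ) - 1) ^ (a - 1) := by
      have h := Phi_csf (starGraph a) k
      rw [Fintype.card_fin] at h
      rw [h, pcount_star_cast a k (h1 a (Multiset.mem_cons_self a s))]
    rw [this]

lemma sum_sub_one (s : Multiset ℕ) (h : ∀ m ∈ s, 1 ≤ m) :
    (s.map fun m => m - 1).sum + s.card = s.sum := by
  induction s using Multiset.induction_on with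
  | empty => simp
  | cons a s ih =>
    have ha := h a (Multiset.mem_cons_self a s)
    have := ih (fun m hm => h m (Multiset.mem_cons_of_mem hm))
    simp only [Multiset.map_cons, Multiset.sum_cons, Multiset.card_cons]
    omega

lemma prod_map_pow (x : ℚ) (s : Multiset ℕ) :
    (s.map fun m => x ^ (m - 1)).prod = x ^ ((s.map fun m => m - 1).sum) := by
  induction s using Multiset.induction_on with
  | empty => simp
  | cons a s ih =>
    simp only [Multiset.map_cons, Multiset.prod_cons, Multiset.sum_cons, ih, pow_add]

lemma Phi_stPart {n : ℕ} (p : Nat.Partition n) (k : ℕ) :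
    Phi n k (stPart p) =
      (k : ℚ) ^ (Multiset.card p.parts) * ((k : ℚ) - 1) ^ (n - Multiset.card p.parts) := by
  have h1 : ∀ m ∈ p.parts, 1 ≤ m := fun m hm => p.parts_pos hm
  have := Phi_prod p.parts h1 k
  rw [p.parts_sum] at this
  rw [stPart, this, Multiset.prod_map_mul]
  have hk : (p.parts.map fun _ => (k : ℚ)).prod = (k : ℚ) ^ (Multiset.card p.parts) := by
    rw [Multiset.map_const', Multiset.prod_replicate]
  rw [hk, prod_map_pow]
  have hs := sum_sub_one p.parts h1
  rw [p.parts_sum] at hs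
  rw [show ((p.parts.map fun m => m - 1).sum) = n - Multiset.card p.parts by omega]

end StarAux4
noncomputable section StarAux5
open Finset SimpleGraph

lemma Phi_sum {ι : Type*} (s : Finset ι) (F : ι → MvPowerSeries ℕ ℚ) (n k : ℕ) :
    Phi n k (∑ i ∈ s, F i) = ∑ i ∈ s, Phi n k (F i) := by
  unfold Phi
  show ∑ d ∈ Dset n k, MvPowerSeries.coeff d (∑ i ∈ s, F i) = ∑ i ∈ s, ∑ d ∈ Dset n k, MvPowerSeries.coeff d (F i); rw [Finset.sum_comm]
  refine Finset.sum_congr rfl fun d _ => ?_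
  exact map_sum (MvPowerSeries.coeff d) F s

lemma Phi_smul (c : ℚ) (f : MvPowerSeries ℕ ℚ) (n k : ℕ) :
    Phi n k (c • f) = c * Phi n k f := by
  unfold Phi
  show ∑ d ∈ Dset n k, MvPowerSeries.coeff d (c • f) = c * ∑ d ∈ Dset n k, MvPowerSeries.coeff d f; rw [Finset.mul_sum]
  refine Finset.sum_congr rfl fun d _ => ?_
  exact map_smul (MvPowerSeries.coeff d) c f

variable {V : Type} [Fintype V]

/-- number of connected components of the graph with edge set S -/
def ncomp (S : Finset (Sym2 V)) : ℕ :=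
  Nat.card (SimpleGraph.fromEdgeSet (↑S : Set (Sym2 V))).ConnectedComponent

lemma walk_color_eq {S : Finset (Sym2 V)} {k : ℕ} (κ : V → Fin k)
    (hκ : ∀ ⦃a b : V⦄, s(a, b) ∈ S → κ a = κ b) {v w : V}
    (p : (SimpleGraph.fromEdgeSet (↑S : Set (Sym2 V))).Walk v w) : κ v = κ w := by
  induction p with
  | nil => rfl
  | cons h _ ih =>
    rw [SimpleGraph.fromEdgeSet_adj] at h
    exact (hκ h.1).trans ih

lemma mono_count (G : SimpleGraph V) (k : ℕ) (S : Finset (Sym2 V))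
    (hS : S ⊆ G.edgeFinset) :
    Nat.card {κ : V → Fin k // ∀ ⦃a b : V⦄, s(a, b) ∈ S → κ a = κ b} = k ^ ncomp S := by
  classical
  have e : {κ : V → Fin k // ∀ ⦃a b : V⦄, s(a, b) ∈ S → κ a = κ b} ≃
      ((SimpleGraph.fromEdgeSet (↑S : Set (Sym2 V))).ConnectedComponent → Fin k) :=
    { toFun := fun κ => SimpleGraph.ConnectedComponent.lift κ.1
        (fun v w p _ => walk_color_eq κ.1 κ.2 p)
      invFun := fun g => ⟨fun v => g ((SimpleGraph.fromEdgeSet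
          (↑S : Set (Sym2 V))).connectedComponentMk v), by
        intro a b hab
        have hne : a ≠ b := by
          have hE : s(a, b) ∈ G.edgeSet := by
            rw [← SimpleGraph.mem_edgeFinset]; exact hS hab
          intro h
          exact G.not_isDiag_of_mem_edgeSet hE (by rw [h]; exact Sym2.isDiag_iff_proj_eq.mpr rfl)
        have hadj : (SimpleGraph.fromEdgeSet (↑S : Set (Sym2 V))).Adj a b :=
          (SimpleGraph.fromEdgeSet_adj _).mpr ⟨by exact_mod_cast hab, hne⟩
        exact congrArg g (SimpleGraph.ConnectedComponent.sound hadj.reachable)⟩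
      left_inv := fun κ => by ext v; rfl
      right_inv := fun g => by
        ext C
        induction C using SimpleGraph.ConnectedComponent.ind with
        | _ v => rfl }
  rw [Nat.card_congr e, Nat.card_fun, Nat.card_eq_fintype_card (α := Fin k),
    Fintype.card_fin, ncomp]

lemma pcount_whitney (G : SimpleGraph V) (k : ℕ) :
    (pcount G k : ℚ) = ∑ S ∈ G.edgeFinset.powerset,
      (-1 : ℚ) ^ S.card * (k : ℚ) ^ ncomp S := by
  classical
  have hterm : ∀ S ∈ G.edgeFinset.powerset,
      ((k : ℚ) ^ ncomp S) = ((univ.filter fun κ : V → Fin k =>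
        ∀ ⦃a b : V⦄, s(a, b) ∈ S → κ a = κ b).card : ℚ) := by
    intro S hS
    have h1 := mono_count G k S (Finset.mem_powerset.mp hS)
    rw [Nat.card_eq_fintype_card, Fintype.card_subtype] at h1
    rw [h1]
    push_cast
    ring
  rw [Finset.sum_congr rfl fun S hS => by rw [hterm S hS]]
  -- turn cardinalities into double sums and swap
  have hswap : ∑ S ∈ G.edgeFinset.powerset, (-1 : ℚ) ^ S.card *
      ((univ.filter fun κ : V → Fin k =>
        ∀ ⦃a b : V⦄, s(a, b) ∈ S → κ a = κ b).card : ℚ)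
      = ∑ κ : V → Fin k, ∑ S ∈ G.edgeFinset.powerset,
          (if ∀ ⦃a b : V⦄, s(a, b) ∈ S → κ a = κ b then (-1 : ℚ) ^ S.card else 0) := by
    rw [Finset.sum_comm]
    refine Finset.sum_congr rfl fun S _ => ?_
    rw [Finset.card_filter, Nat.cast_sum, Finset.mul_sum]
    refine Finset.sum_congr rfl fun κ _ => ?_
    split_ifs <;> simp
  rw [hswap]
  -- inner sum is the indicator of properness
  have hinner : ∀ κ : V → Fin k,
      (∑ S ∈ G.edgeFinset.powerset,
        (if ∀ ⦃a b : V⦄, s(a, b) ∈ S → κ a = κ b then (-1 : ℚ) ^ S.card else 0))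
      = (if ∀ ⦃v w : V⦄, G.Adj v w → κ v ≠ κ w then 1 else 0) := by
    intro κ
    set M : Finset (Sym2 V) := G.edgeFinset.filter
      (fun e => ∀ a b, e = s(a, b) → κ a = κ b) with hM
    have hMsub : M ⊆ G.edgeFinset := Finset.filter_subset _ _
    have hiff : ∀ S ∈ G.edgeFinset.powerset,
        ((∀ ⦃a b : V⦄, s(a, b) ∈ S → κ a = κ b) ↔ S ⊆ M) := by
      intro S hS
      rw [Finset.mem_powerset] at hS
      constructor
      · intro h e he
        rw [hM, Finset.mem_filter]
        refine ⟨hS he, ?_⟩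
        rintro a b rfl
        exact h he
      · intro h a b hab
        have := h hab
        rw [hM, Finset.mem_filter] at this
        exact this.2 a b rfl
    rw [Finset.sum_congr rfl fun S hS => by rw [if_congr (hiff S hS) rfl rfl]]
    have hps : G.edgeFinset.powerset.filter (fun S => S ⊆ M) = M.powerset := by
      ext S
      simp only [Finset.mem_filter, Finset.mem_powerset]
      exact ⟨fun h => h.2, fun h => ⟨h.trans hMsub, h⟩⟩
    rw [← Finset.sum_filter, hps]
    have hz : (∑ S ∈ M.powerset, (-1 : ℚ) ^ S.card) =
        (((∑ S ∈ M.powerset, (-1 : ℤ) ^ S.card) : ℤ) : ℚ) := by push_cast; rfl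
    rw [hz, Finset.sum_powerset_neg_one_pow_card]
    have hMe : M = ∅ ↔ ∀ ⦃v w : V⦄, G.Adj v w → κ v ≠ κ w := by
      constructor
      · intro h v w hvw hcol
        have : s(v, w) ∈ M := by
          rw [hM, Finset.mem_filter]
          refine ⟨SimpleGraph.mem_edgeFinset.mpr hvw, ?_⟩
          rintro a b hab
          rw [Sym2.eq_iff] at hab
          rcases hab with ⟨rfl, rfl⟩ | ⟨rfl, rfl⟩
          · exact hcol
          · exact hcol.symm
        rw [h] at this
        exact absurd this (Finset.notMem_empty _)
      · intro h
        rw [Finset.eq_empty_iff_forall_notMem]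
        intro e he
        rw [hM, Finset.mem_filter] at he
        obtain ⟨a, b⟩ := e
        have hadj : G.Adj a b := SimpleGraph.mem_edgeFinset.mp he.1
        exact h hadj (he.2 a b rfl)
    split_ifs with h1 h2 h2 <;> simp_all [hMe]
  rw [Finset.sum_congr rfl fun κ _ => hinner κ, Finset.sum_boole]
  rw [pcount, Nat.card_eq_fintype_card, Fintype.card_subtype]

end StarAux5
noncomputable section GraphAux
open Finset SimpleGraph

variable {V : Type} [Fintype V]

lemma connected_delete_of_not_bridge {H : SimpleGraph V} (hH : H.Connected)
    {e : Sym2 V} (he : e ∈ H.edgeSet) (hb : ¬H.IsBridge e) :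
    (H.deleteEdges {e}).Connected := by
  induction e using Sym2.ind with
  | _ u0 v0 =>
    rw [SimpleGraph.isBridge_iff, not_not] at hb
    have hr : (H.deleteEdges {s(u0, v0)}).Reachable u0 v0 := hb
    rw [SimpleGraph.connected_iff]
    refine ⟨?_, hH.nonempty⟩
    intro a b
    obtain ⟨p⟩ := hH.preconnected a b
    induction p with
    | nil => exact SimpleGraph.Reachable.refl _
    | cons h q ih =>
      rename_i x y z
      refine SimpleGraph.Reachable.trans ?_ ih
      by_cases hxy : s(x, y) = s(u0, v0)
      · rw [Sym2.eq_iff] at hxy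
        rcases hxy with ⟨rfl, rfl⟩ | ⟨rfl, rfl⟩
        · exact hr
        · exact hr.symm
      · exact (SimpleGraph.deleteEdges_adj.mpr ⟨h, by simpa using hxy⟩).reachable

lemma edgeFinset_deleteEdges_eq (H : SimpleGraph V) (e : Sym2 V) (he : e ∈ H.edgeFinset) :
    (H.deleteEdges {e}).edgeFinset = H.edgeFinset.erase e := by
  ext f
  simp only [SimpleGraph.mem_edgeFinset, SimpleGraph.edgeSet_deleteEdges, Set.mem_diff,
    Set.mem_singleton_iff, Finset.mem_erase]
  tauto

lemma natcard_edge {W : Type} [Fintype W] (H : SimpleGraph W) [Fintype H.edgeSet] :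
    Nat.card H.edgeSet = H.edgeFinset.card := by
  rw [SimpleGraph.edgeFinset_card, Nat.card_eq_fintype_card]

lemma connected_card_le : ∀ (m : ℕ) (H : SimpleGraph V),
    Nat.card H.edgeSet = m → H.Connected → Fintype.card V ≤ m + 1 := by
  intro m
  induction m using Nat.strong_induction_on with
  | _ m ih =>
    intro H hm0 hconn
    have hm : H.edgeFinset.card = m := by rw [← hm0, natcard_edge]
    by_cases hac : H.IsAcyclic
    · have ht : H.IsTree := ⟨hconn, hac⟩
      rw [← ht.card_edgeFinset, hm]
    · rw [SimpleGraph.isAcyclic_iff_forall_edge_isBridge] at hac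
      push_neg at hac
      obtain ⟨e, he, hb⟩ := hac
      have hm1 : 1 ≤ m := by
        rw [← hm]
        exact Finset.card_pos.mpr ⟨e, SimpleGraph.mem_edgeFinset.mpr he⟩
      have hconn' := connected_delete_of_not_bridge hconn he hb
      have hcard : Nat.card (H.deleteEdges {e}).edgeSet = m - 1 := by
        rw [natcard_edge, edgeFinset_deleteEdges_eq H e (SimpleGraph.mem_edgeFinset.mpr he),
          Finset.card_erase_of_mem (SimpleGraph.mem_edgeFinset.mpr he), hm]
      have := ih (m - 1) (by omega) _ hcard hconn'
      omega

lemma fromEdgeSet_coe_eq (G : SimpleGraph V) (S : Finset (Sym2 V)) (hS : S ⊆ G.edgeFinset) :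
    (SimpleGraph.fromEdgeSet (↑S : Set (Sym2 V))).edgeFinset = S := by
  ext f
  simp only [SimpleGraph.mem_edgeFinset, SimpleGraph.edgeSet_fromEdgeSet, Set.mem_diff,
    Set.mem_setOf_eq, Finset.mem_coe]
  refine ⟨fun h => h.1, fun h => ⟨h, ?_⟩⟩
  exact G.not_isDiag_of_mem_edgeSet (SimpleGraph.mem_edgeFinset.mp (hS h))

lemma fromEdgeSet_edgeFinset (G : SimpleGraph V) :
    SimpleGraph.fromEdgeSet (↑G.edgeFinset : Set (Sym2 V)) = G := by
  rw [SimpleGraph.coe_edgeFinset, SimpleGraph.fromEdgeSet_edgeSet]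

lemma fromEdgeSet_erase (G : SimpleGraph V) (e : Sym2 V) (he : e ∈ G.edgeFinset) :
    SimpleGraph.fromEdgeSet (↑(G.edgeFinset.erase e) : Set (Sym2 V)) = G.deleteEdges {e} := by
  ext a b
  rw [SimpleGraph.fromEdgeSet_adj, SimpleGraph.deleteEdges_adj]
  simp only [Finset.coe_erase, Set.mem_diff, Finset.mem_coe, SimpleGraph.mem_edgeFinset,
    SimpleGraph.mem_edgeSet, Set.mem_singleton_iff]
  constructor
  · rintro ⟨⟨h1, h2⟩, _⟩
    exact ⟨h1, h2⟩
  · rintro ⟨h1, h2⟩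
    exact ⟨⟨h1, h2⟩, h1.ne⟩

lemma ncomp_eq_one_iff (S : Finset (Sym2 V)) (hne : Nonempty V) :
    ncomp S = 1 ↔ (SimpleGraph.fromEdgeSet (↑S : Set (Sym2 V))).Connected := by
  rw [ncomp, Nat.card_eq_one_iff_unique, SimpleGraph.connected_iff]
  constructor
  · rintro ⟨hsub, -⟩
    refine ⟨fun a b => ?_, hne⟩
    exact SimpleGraph.ConnectedComponent.exact (Subsingleton.elim _ _)
  · rintro ⟨hp, hne'⟩
    constructor
    · constructor
      intro C D
      induction C using SimpleGraph.ConnectedComponent.ind with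
      | _ v =>
        induction D using SimpleGraph.ConnectedComponent.ind with
        | _ w => exact SimpleGraph.ConnectedComponent.sound (hp v w)
    · obtain ⟨v⟩ := hne'
      exact ⟨SimpleGraph.connectedComponentMk _ v⟩

end GraphAux
noncomputable section CountAux
open Finset SimpleGraph

lemma sum_conn_eq {V : Type} [Fintype V] (G : SimpleGraph V) (n c : ℕ)
    (hconn : G.Connected) (hn : Fintype.card V = n) (hn1 : 1 ≤ n)
    (huni : G.edgeFinset.card = n) (hc : G.girth = c) (hc3 : 3 ≤ c) :
    ∑ S ∈ G.edgeFinset.powerset.filter (fun S => ncomp S = 1), (-1 : ℚ) ^ S.card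
      = (-1 : ℚ) ^ n + (c : ℚ) * (-1 : ℚ) ^ (n - 1) := by
  classical
  have hNe : Nonempty V := by
    rw [← Fintype.card_pos_iff, hn]; omega
  have hnac : ¬G.IsAcyclic := by
    intro h
    rw [h.girth_eq_zero] at hc
    omega
  obtain ⟨a, w, hw, hlen⟩ := SimpleGraph.exists_girth_eq_length.mpr hnac
  have hwc : w.length = c := by rw [← hlen, hc]
  set T : Finset (Sym2 V) := w.edges.toFinset with hT
  have hTsub : T ⊆ G.edgeFinset := by
    intro e he
    rw [hT, List.mem_toFinset] at he
    exact SimpleGraph.mem_edgeFinset.mpr (w.edges_subset_edgeSet he)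
  have hTcard : T.card = c := by
    rw [hT, List.toFinset_card_of_nodup hw.edges_nodup, SimpleGraph.Walk.length_edges, hwc]
  have hcn : 3 ≤ n := by
    have := Finset.card_le_card hTsub
    rw [hTcard, huni] at this
    omega
  have key1 : ∀ e ∈ T, (G.deleteEdges {e}).Connected := by
    intro e he
    rw [hT, List.mem_toFinset] at he
    refine connected_delete_of_not_bridge hconn (w.edges_subset_edgeSet he) ?_
    intro hb
    rw [SimpleGraph.isBridge_iff_mem_and_forall_cycle_notMem (w.edges_subset_edgeSet he)] at hb
    exact hb w hw he
  have key2 : ∀ e ∈ G.edgeFinset, (G.deleteEdges {e}).Connected → e ∈ T := by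
    intro e heE hconn'
    by_contra heT
    rw [hT, List.mem_toFinset] at heT
    have hesurv : ∀ f ∈ w.edges, f ∉ ({e} : Set (Sym2 V)) := by
      intro f hf hfe
      rw [Set.mem_singleton_iff] at hfe
      exact heT (hfe ▸ hf)
    set w' := w.toDeleteEdges {e} hesurv with hw'
    have hw'c : w'.IsCycle := SimpleGraph.Walk.IsCycle.toDeleteEdges G ({e} : Set (Sym2 V)) hw hesurv
    have hnn : w'.edges ≠ [] := by
      have h3 := hw'c.three_le_length
      have := w'.length_edges
      intro h0
      rw [h0] at this
      simp at this
      omega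
    set f := w'.edges.head hnn with hf
    have hfmem : f ∈ w'.edges := List.head_mem hnn
    have hfE : f ∈ (G.deleteEdges {e}).edgeSet := w'.edges_subset_edgeSet hfmem
    have hfb : ¬(G.deleteEdges {e}).IsBridge f := by
      intro hb
      rw [SimpleGraph.isBridge_iff_mem_and_forall_cycle_notMem hfE] at hb
      exact hb w' hw'c hfmem
    have hconn'' := connected_delete_of_not_bridge hconn' hfE hfb
    have hc1 : (G.deleteEdges {e}).edgeFinset.card = n - 1 := by
      rw [edgeFinset_deleteEdges_eq G e heE, Finset.card_erase_of_mem heE, huni]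
    have hc2 : Nat.card ((G.deleteEdges {e}).deleteEdges {f}).edgeSet = n - 2 := by
      rw [Nat.card_coe_set_eq, SimpleGraph.edgeSet_deleteEdges, Set.ncard_sdiff_singleton_of_mem hfE,
        ← Nat.card_coe_set_eq, natcard_edge, hc1]
      omega
    have := connected_card_le (n - 2) _ hc2 hconn''
    omega
  have hclass : G.edgeFinset.powerset.filter (fun S => ncomp S = 1) =
      insert G.edgeFinset (T.image (fun e => G.edgeFinset.erase e)) := by
    ext S
    rw [Finset.mem_filter, Finset.mem_powerset, Finset.mem_insert, Finset.mem_image]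
    constructor
    · rintro ⟨hSsub, hcomp⟩
      have hScon := (ncomp_eq_one_iff S hNe).mp hcomp
      have hbound : n ≤ S.card + 1 := by
        have hsub2 : (SimpleGraph.fromEdgeSet (↑S : Set (Sym2 V))).edgeFinset ⊆ S := by
          intro x hx
          rw [SimpleGraph.mem_edgeFinset, SimpleGraph.edgeSet_fromEdgeSet] at hx
          exact hx.1
        have h5 := connected_card_le
          ((SimpleGraph.fromEdgeSet (↑S : Set (Sym2 V))).edgeFinset.card) _
          (natcard_edge _) hScon
        have h6 := Finset.card_le_card hsub2
        omega
      have hSle : S.card ≤ n := by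
        have := Finset.card_le_card hSsub
        omega
      rcases Nat.eq_or_lt_of_le hSle with hcase | hcase
      · left
        exact Finset.eq_of_subset_of_card_le hSsub (by omega)
      · right
        have hScard : S.card = n - 1 := by omega
        have hsd : (G.edgeFinset \ S).card = 1 := by
          rw [Finset.card_sdiff_of_subset hSsub, huni, hScard]
          omega
        obtain ⟨e, hdiff⟩ := Finset.card_eq_one.mp hsd
        have heE : e ∈ G.edgeFinset ∧ e ∉ S := by
          have : e ∈ G.edgeFinset \ S := by rw [hdiff]; exact Finset.mem_singleton_self e
          exact Finset.mem_sdiff.mp this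
        have hSeq : S = G.edgeFinset.erase e := by
          ext x
          rw [Finset.mem_erase]
          constructor
          · intro hx
            exact ⟨fun h => heE.2 (h ▸ hx), hSsub hx⟩
          · rintro ⟨hxe, hxE⟩
            by_contra hxS
            have : x ∈ G.edgeFinset \ S := Finset.mem_sdiff.mpr ⟨hxE, hxS⟩
            rw [hdiff, Finset.mem_singleton] at this
            exact hxe this
        refine ⟨e, ?_, hSeq.symm⟩
        apply key2 e heE.1
        rw [← fromEdgeSet_erase G e heE.1, ← hSeq]
        exact hScon
    · rintro (rfl | ⟨e, heT, rfl⟩)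
      · refine ⟨le_refl _, ?_⟩
        rw [ncomp_eq_one_iff _ hNe, fromEdgeSet_edgeFinset]
        exact hconn
      · refine ⟨Finset.erase_subset _ _, ?_⟩
        rw [ncomp_eq_one_iff _ hNe, fromEdgeSet_erase G e (hTsub heT)]
        exact key1 e heT
  rw [hclass, Finset.sum_insert, Finset.sum_image]
  · have hterm : ∀ e ∈ T, (-1 : ℚ) ^ (G.edgeFinset.erase e).card = (-1 : ℚ) ^ (n - 1) := by
      intro e he
      rw [Finset.card_erase_of_mem (hTsub he), huni]
    rw [Finset.sum_congr rfl hterm, Finset.sum_const, hTcard, huni, nsmul_eq_mul]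
  · -- injectivity of erase on T
    intro e he e' he' heq
    by_contra hne
    have : e ∈ G.edgeFinset.erase e' := Finset.mem_erase.mpr ⟨hne, hTsub he⟩
    rw [← show G.edgeFinset.erase e = G.edgeFinset.erase e' from heq, Finset.mem_erase] at this
    exact this.1 rfl
  · -- edgeFinset not in image
    intro hmem
    obtain ⟨e, he, heq⟩ := Finset.mem_image.mp hmem
    have h1 : (G.edgeFinset.erase e).card = n - 1 := by
      rw [Finset.card_erase_of_mem (hTsub he), huni]
    rw [heq, huni] at h1
    omega

end CountAux
noncomputable section FinalAux
open Finset Polynomial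

lemma card_one_eq_hook {n : ℕ} (hn1 : 1 ≤ n) (p : Nat.Partition n)
    (h : Multiset.card p.parts = 1) : p = hookPartition n 0 hn1 := by
  obtain ⟨a, ha⟩ := Multiset.card_eq_one.mp h
  have hsum := p.parts_sum
  rw [ha, Multiset.sum_singleton] at hsum
  have hh : (hookPartition n 0 hn1).parts = {n} := by
    show (n - 0) ::ₘ Multiset.replicate 0 1 = {n}
    simp
  refine Nat.Partition.ext ?_
  rw [ha, hh, hsum]

lemma hook_card_one {n : ℕ} (hn1 : 1 ≤ n) :
    Multiset.card (hookPartition n 0 hn1).parts = 1 := by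
  show Multiset.card ((n - 0) ::ₘ Multiset.replicate 0 1) = 1
  simp

lemma parts_card_pos {n : ℕ} (hn1 : 1 ≤ n) (p : Nat.Partition n) :
    1 ≤ Multiset.card p.parts := by
  by_contra h
  have h0 : p.parts = 0 := Multiset.card_eq_zero.mp (by omega)
  have := p.parts_sum
  rw [h0] at this
  simp at this
  omega

lemma coeff_one_X_pow_mul (r : Polynomial ℚ) (j : ℕ) :
    (Polynomial.X ^ j * r).coeff 1 = if j ≤ 1 then r.coeff (1 - j) else 0 := by
  rw [mul_comm, Polynomial.coeff_mul_X_pow']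

end FinalAux
/-- For a connected unicyclic graph of order `n` with cycle size `c ≥ 3`, the coefficient of
`st_{(n)}` in the star-basis expansion of `X_G` equals `c - 1`. -/
theorem unicyclic_coeff_top_hook {V : Type} [Fintype V] (G : SimpleGraph V)
    (n c : ℕ) (hconn : G.Connected) (hn : Fintype.card V = n) (hn1 : 1 ≤ n)
    (huni : Nat.card G.edgeSet = n)
    (hc : G.girth = c) (hc3 : 3 ≤ c)
    (coef : Nat.Partition n → ℚ)
    (hexp : csf G = ∑ p : Nat.Partition n, coef p • stPart p) :
    coef (hookPartition n 0 hn1) = (c : ℚ) - 1 := by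
  classical
  have huni' : G.edgeFinset.card = n := by rw [← huni, natcard_edge]
  have hA : ∀ k : ℕ, (pcount G k : ℚ) = ∑ p : Nat.Partition n, coef p *
      ((k : ℚ) ^ (Multiset.card p.parts) * ((k : ℚ) - 1) ^ (n - Multiset.card p.parts)) := by
    intro k
    have h1 := Phi_csf G k
    rw [hn] at h1
    rw [← h1, hexp, Phi_sum]
    refine Finset.sum_congr rfl fun p _ => ?_
    rw [Phi_smul, Phi_stPart]
  set Pw : Polynomial ℚ := ∑ S ∈ G.edgeFinset.powerset,
    Polynomial.C ((-1 : ℚ) ^ S.card) * Polynomial.X ^ (ncomp S) with hPw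
  set Q : Polynomial ℚ := ∑ p : Nat.Partition n,
    Polynomial.C (coef p) * (Polynomial.X ^ (Multiset.card p.parts) *
      (Polynomial.X - 1) ^ (n - Multiset.card p.parts)) with hQ
  have heval : ∀ k : ℕ, Pw.eval (k : ℚ) = Q.eval (k : ℚ) := by
    intro k
    have e1 : Pw.eval (k : ℚ) = (pcount G k : ℚ) := by
      rw [hPw, Polynomial.eval_finset_sum]
      simp only [Polynomial.eval_mul, Polynomial.eval_pow, Polynomial.eval_C, Polynomial.eval_X]
      exact (pcount_whitney G k).symm
    have e2 : Q.eval (k : ℚ) = (pcount G k : ℚ) := by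
      rw [hQ, Polynomial.eval_finset_sum]
      simp only [Polynomial.eval_mul, Polynomial.eval_pow, Polynomial.eval_C, Polynomial.eval_X,
        Polynomial.eval_sub, Polynomial.eval_one]
      exact (hA k).symm
    rw [e1, e2]
  have hPQ : Pw = Q := by
    have hroot : {x : ℚ | (Pw - Q).IsRoot x}.Infinite := by
      apply Set.infinite_of_injective_forall_mem (f := fun k : ℕ => (k : ℚ))
        Nat.cast_injective
      intro k
      simp only [Set.mem_setOf_eq, Polynomial.IsRoot, Polynomial.eval_sub, heval k, sub_self]
    exact sub_eq_zero.mp (Polynomial.eq_zero_of_infinite_isRoot _ hroot)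
  have hcoeffP : Pw.coeff 1 =
      ∑ S ∈ G.edgeFinset.powerset.filter (fun S => ncomp S = 1), (-1 : ℚ) ^ S.card := by
    rw [hPw, Polynomial.finset_sum_coeff, Finset.sum_filter]
    refine Finset.sum_congr rfl fun S _ => ?_
    rw [Polynomial.coeff_C_mul, Polynomial.coeff_X_pow]
    by_cases h : ncomp S = 1
    · simp [h]
    · have h' : ¬(1 = ncomp S) := fun hh => h hh.symm
      simp [h, h']
  have hcoeffQ : Q.coeff 1 = coef (hookPartition n 0 hn1) * (-1 : ℚ) ^ (n - 1) := by
    rw [hQ, Polynomial.finset_sum_coeff]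
    have hterm : ∀ p : Nat.Partition n,
        (Polynomial.C (coef p) * (Polynomial.X ^ (Multiset.card p.parts) *
          (Polynomial.X - 1) ^ (n - Multiset.card p.parts))).coeff 1 =
        if p = hookPartition n 0 hn1 then coef p * (-1 : ℚ) ^ (n - 1) else 0 := by
      intro p
      rw [Polynomial.coeff_C_mul, coeff_one_X_pow_mul]
      have hpos := parts_card_pos hn1 p
      by_cases hcard : Multiset.card p.parts = 1
      · have hp := card_one_eq_hook hn1 p hcard
        rw [if_pos hp, hcard, if_pos le_rfl]
        congr 1
        rw [show (1 : ℕ) - 1 = 0 from rfl, Polynomial.coeff_zero_eq_eval_zero]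
        simp
      · have h2 : ¬(Multiset.card p.parts ≤ 1) := by omega
        rw [if_neg h2, mul_zero, if_neg]
        intro hp
        rw [hp, hook_card_one hn1] at hcard
        exact hcard rfl
    rw [Finset.sum_congr rfl fun p _ => hterm p, Finset.sum_ite_eq' Finset.univ
      (hookPartition n 0 hn1) (fun p => coef p * (-1 : ℚ) ^ (n - 1)),
      if_pos (Finset.mem_univ _)]
  have hmain : coef (hookPartition n 0 hn1) * (-1 : ℚ) ^ (n - 1) =
      (-1 : ℚ) ^ n + (c : ℚ) * (-1 : ℚ) ^ (n - 1) := by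
    rw [← hcoeffQ, ← hPQ, hcoeffP]
    exact sum_conn_eq G n c hconn hn hn1 huni' hc hc3
  have hne : ((-1 : ℚ)) ^ (n - 1) ≠ 0 := pow_ne_zero _ (by norm_num)
  have hpow : (-1 : ℚ) ^ n = (-1 : ℚ) ^ (n - 1) * (-1) := by
    conv_lhs => rw [show n = (n - 1) + 1 by omega]
    rw [pow_succ]
  apply mul_right_cancel₀ hne
  rw [hmain, hpow]
  ring
end

section
/- For integers 2 ≤ j ≤ n and nonnegative integers m_2, ..., m_n with Σ_{j≥2} j·m_j = n − m_1 and Σ_{j≥2} m_j = ℓ − m_1 > 0, one has Σ_{j=2}^{n} (j−1) · multinomial(m_2+···+m_n − 1; m_2, ..., m_j − 1, ..., m_n) = ((n − ℓ)/(ℓ − m_1)) · multinomial(m_2+···+m_n; m_2, ..., m_n), where terms with m_j = 0 are treated as zero. -/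
open scoped Classical
open Finset

open Nat in
lemma key_mult (s : Finset ℕ) (m : ℕ → ℕ) (j : ℕ) (hj : j ∈ s) (hmj : m j ≠ 0) :
    (∑ i ∈ s, m i) * Nat.multinomial s (fun i => if i = j then m i - 1 else m i) =
      m j * Nat.multinomial s m := by
  set f' : ℕ → ℕ := fun i => if i = j then m i - 1 else m i with hf'
  have hL : ∑ i ∈ s, m i = m j + ∑ i ∈ s.erase j, m i := (Finset.add_sum_erase s m hj).symm
  have hL' : ∑ i ∈ s, f' i = (m j - 1) + ∑ i ∈ s.erase j, m i := by
    rw [← Finset.add_sum_erase s f' hj]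
    simp only [hf', if_pos rfl]
    congr 1
    exact Finset.sum_congr rfl fun i hi => by simp [Finset.ne_of_mem_erase hi]
  have hsum' : ∑ i ∈ s, f' i + 1 = ∑ i ∈ s, m i := by omega
  have hP : ∏ i ∈ s, (m i)! = (m j)! * ∏ i ∈ s.erase j, (m i)! :=
    (Finset.mul_prod_erase s _ hj).symm
  have hP' : ∏ i ∈ s, (f' i)! = (m j - 1)! * ∏ i ∈ s.erase j, (m i)! := by
    rw [← Finset.mul_prod_erase s _ hj]
    simp only [hf', if_pos rfl]
    congr 1
    exact Finset.prod_congr rfl fun i hi => by simp [Finset.ne_of_mem_erase hi]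
  have hfac : (m j)! = m j * (m j - 1)! :=
    (Nat.mul_factorial_pred hmj).symm
  have hPpos : 0 < ∏ i ∈ s, (m i)! := Finset.prod_pos fun i _ => Nat.factorial_pos _
  apply Nat.eq_of_mul_eq_mul_left hPpos
  calc (∏ i ∈ s, (m i)!) * ((∑ i ∈ s, m i) * Nat.multinomial s f')
      = (m j * (∑ i ∈ s, m i)) * ((∏ i ∈ s, (f' i)!) * Nat.multinomial s f') := by
        rw [hP, hP', hfac]; ring
    _ = (m j * (∑ i ∈ s, m i)) * (∑ i ∈ s, f' i)! := by rw [Nat.multinomial_spec]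
    _ = m j * (∑ i ∈ s, m i)! := by
        rw [← hsum', Nat.factorial_succ]; ring
    _ = m j * ((∏ i ∈ s, (m i)!) * Nat.multinomial s m) := by rw [Nat.multinomial_spec]
    _ = _ := by ring


open Nat in
/-- A multinomial identity: for nonnegative integers `m₂, …, m_n` with
`∑_{j≥2} j·m_j = n - m₁` and `∑_{j≥2} m_j = ℓ - m₁ > 0`,
`∑_{j=2}^n (j-1)·multinomial(m₂+⋯+m_n - 1; m₂, …, m_j - 1, …, m_n)
  = ((n-ℓ)/(ℓ-m₁))·multinomial(m₂+⋯+m_n; m₂, …, m_n)`,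
where terms with `m_j = 0` are treated as zero. -/
theorem multinomial_cycle_identity (n ℓ m₁ : ℕ) (m : ℕ → ℕ)
    (hsum : (∑ j ∈ Finset.Icc 2 n, j * m j) + m₁ = n)
    (hlen : (∑ j ∈ Finset.Icc 2 n, m j) + m₁ = ℓ)
    (hpos : m₁ < ℓ) :
    ∑ j ∈ Finset.Icc 2 n, ((j : ℚ) - 1) *
        (if m j = 0 then 0 else
          (Nat.multinomial (Finset.Icc 2 n) (fun i => if i = j then m i - 1 else m i) : ℚ)) =
      (((n : ℚ) - (ℓ : ℚ)) / ((ℓ : ℚ) - (m₁ : ℚ))) *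
        (Nat.multinomial (Finset.Icc 2 n) m : ℚ) := by
  set s := Finset.Icc 2 n with hs
  set L : ℕ := ∑ i ∈ s, m i with hLdef
  have hLpos : 0 < L := by omega
  have hLQ : ((ℓ : ℚ) - (m₁ : ℚ)) = (L : ℚ) := by
    have : (L : ℚ) + m₁ = ℓ := by exact_mod_cast hlen
    linarith
  have hLne : (L : ℚ) ≠ 0 := by positivity
  have step : ∀ j ∈ s, ((j : ℚ) - 1) *
        (if m j = 0 then 0 else
          (Nat.multinomial s (fun i => if i = j then m i - 1 else m i) : ℚ)) =
      (((j : ℚ) - 1) * (m j : ℚ) / (L : ℚ)) * (Nat.multinomial s m : ℚ) := by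
    intro j hj
    by_cases hmj : m j = 0
    · simp [hmj]
    · rw [if_neg hmj]
      have := key_mult s m j hj hmj
      have hQ : (L : ℚ) * (Nat.multinomial s (fun i => if i = j then m i - 1 else m i) : ℚ)
          = (m j : ℚ) * (Nat.multinomial s m : ℚ) := by exact_mod_cast this
      rw [div_mul_eq_mul_div, eq_div_iff hLne]
      linarith [mul_comm ((j:ℚ)-1) ((Nat.multinomial s (fun i => if i = j then m i - 1 else m i) : ℚ)),
        congrArg (fun x => ((j:ℚ)-1) * x) hQ]
  rw [Finset.sum_congr rfl step, ← Finset.sum_mul, ← Finset.sum_div]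
  have hnum : ∑ j ∈ s, ((j : ℚ) - 1) * (m j : ℚ) = (n : ℚ) - (ℓ : ℚ) := by
    have h1 : (∑ j ∈ s, (j : ℚ) * (m j : ℚ)) + (m₁ : ℚ) = (n : ℚ) := by
      exact_mod_cast hsum
    have h2 : (∑ j ∈ s, (m j : ℚ)) + (m₁ : ℚ) = (ℓ : ℚ) := by exact_mod_cast hlen
    have : ∑ j ∈ s, ((j : ℚ) - 1) * (m j : ℚ)
        = (∑ j ∈ s, (j : ℚ) * (m j : ℚ)) - ∑ j ∈ s, (m j : ℚ) := by
      rw [← Finset.sum_sub_distrib]; exact Finset.sum_congr rfl fun j _ => by ring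
    rw [this]; linarith
  rw [hnum, hLQ]
end
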